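/- Equivalence of local and global characterizations of the patch-sparse model: let 𝓜 = { x ∈ ℝ^N : R_i x = D α_i with ‖α_i‖₀ ≤ s for all i = 1,…,P } (cyclic patches, P = N). Then 𝓜 = { x ∈ ℝ^N : x = D_GΓ, MΓ = 0, ‖Γ‖_{0,∞} ≤ s }, where D_G is the global convolutional dictionary with blocks (1/n)R_iᵀD, M is the block matrix with block rows Q_i − R_iD_G, and ‖Γ‖_{0,∞} = max_i ‖α_i‖₀. -/

import Mathlib

open Matrix

noncomputable section

/-- Cyclic patch-extraction operator: extracts the `n` consecutive coordinates of a signal of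
length `N` starting at position `i`, indices taken modulo `N`. -/
def Rop (N n : ℕ) (i : Fin N) : Matrix (Fin n) (Fin N) ℝ :=
  Matrix.of fun k j => if (j : ℕ) = ((i : ℕ) + (k : ℕ)) % N then 1 else 0

/-- Global convolutional dictionary: horizontal concatenation of the blocks `(1/n) • Rᵢᵀ D`. -/
def DG (N n m : ℕ) (D : Matrix (Fin n) (Fin m) ℝ) : Matrix (Fin N) (Fin N × Fin m) ℝ :=
  Matrix.of fun x p => ((1 / (n : ℝ)) • ((Rop N n p.1)ᵀ * D)) x p.2

/-- `Qᵢ` places `D` in block position `i` and zeros elsewhere. -/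
def Qop (N n m : ℕ) (D : Matrix (Fin n) (Fin m) ℝ) (i : Fin N) :
    Matrix (Fin n) (Fin N × Fin m) ℝ :=
  Matrix.of fun k p => if p.1 = i then D k p.2 else 0

/-- Patch-agreement constraint matrix `M`: block rows `Qᵢ - Rᵢ D_G`. -/
def Mop (N n m : ℕ) (D : Matrix (Fin n) (Fin m) ℝ) :
    Matrix (Fin N × Fin n) (Fin N × Fin m) ℝ :=
  Matrix.of fun q p => (Qop N n m D q.1 - Rop N n q.1 * DG N n m D) q.2 p

/-- Bottom extraction operator `S_B = [0  I_{n-1}]`. -/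
def SBop (n : ℕ) : Matrix (Fin (n - 1)) (Fin n) ℝ :=
  Matrix.of fun r j => if (j : ℕ) = (r : ℕ) + 1 then 1 else 0

/-- Top extraction operator `S_T = [I_{n-1}  0]`. -/
def STop (n : ℕ) : Matrix (Fin (n - 1)) (Fin n) ℝ :=
  Matrix.of fun r j => if (j : ℕ) = (r : ℕ) then 1 else 0

/-- `ℓ₀` pseudo-norm: the number of nonzero entries. -/
def l0 {m : ℕ} (α : Fin m → ℝ) : ℕ := (Function.support α).ncard

/-- The support of a vector, as a `Finset`. -/
def suppF {m : ℕ} (α : Fin m → ℝ) : Finset (Fin m) :=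
  (Set.toFinite (Function.support α)).toFinset

/-- The spark of a dictionary: the minimal number of linearly dependent columns (`⊤` if the
columns are linearly independent). -/
def spark {n m : ℕ} (D : Matrix (Fin n) (Fin m) ℝ) : ℕ∞ :=
  sInf {j : ℕ∞ | ∃ s : Finset (Fin m), (s.card : ℕ∞) = j ∧
    (D.submatrix id (fun a : {a // a ∈ s} => (a : Fin m))).rank < s.card}

/-- The globalized spark relative to a family `T` of allowed supports. -/
def gspark {n m : ℕ} (D : Matrix (Fin n) (Fin m) ℝ) (T : Set (Finset (Fin m))) : ℕ∞ :=
  sInf {j : ℕ∞ | ∃ s₁ ∈ T, ∃ s₂ ∈ T, (((s₁ ∪ s₂).card : ℕ) : ℕ∞) = j ∧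
    (D.submatrix id (fun a : {a // a ∈ s₁ ∪ s₂} => (a : Fin m))).rank < (s₁ ∪ s₂).card}

/-!
The cyclic patches cover every coordinate exactly `n` times: `∑ᵢ Rᵢᵀ Rᵢ = n • 1`. So if
`Rᵢ x = D αᵢ` for all `i`, the stacked vector `Γ = (αᵢ)ᵢ` satisfies
`D_G Γ = (1/n) ∑ᵢ Rᵢᵀ D αᵢ = (1/n) ∑ᵢ Rᵢᵀ Rᵢ x = x`, and then `MΓ = 0` holds because it says
precisely `D αᵢ = Rᵢ (D_G Γ)` for every `i`. Conversely, from `MΓ = 0` the blocks of `Γ` are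
local representations of the patches of `x = D_G Γ`.
-/

lemma Rop_apply (N n : ℕ) [NeZero N] (i : Fin N) (k : Fin n) (j : Fin N) :
    Rop N n i k j = if j = i + Fin.ofNat N k then 1 else 0 := by
  simp [Rop, Fin.ext_iff, Fin.val_add]

lemma sum_transpose_Rop_mul_Rop (N n : ℕ) :
    ∑ i : Fin N, (Rop N n i)ᵀ * Rop N n i = (n : ℝ) • (1 : Matrix (Fin N) (Fin N) ℝ) := by
  ext a b
  have : NeZero N := NeZero.of_pos a.pos
  have shift (c : Fin N) :
      ∑ i : Fin N, (if a = i + c then (1 : ℝ) else 0) * (if b = i + c then 1 else 0) =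
        if a = b then 1 else 0 := by
    refine (Equiv.sum_comp (Equiv.addRight c)
      fun j => (if a = j then (1 : ℝ) else 0) * (if b = j then 1 else 0)).trans ?_
    simp
  simp only [Matrix.sum_apply, Matrix.mul_apply, Matrix.transpose_apply, Rop_apply]
  rw [Finset.sum_comm]
  simp only [shift]
  simp [Matrix.one_apply]

lemma Qop_mulVec (N n m : ℕ) (D : Matrix (Fin n) (Fin m) ℝ) (i : Fin N)
    (Γ : Fin N × Fin m → ℝ) :
    Qop N n m D i *ᵥ Γ = D *ᵥ (fun a => Γ (i, a)) := by
  ext k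
  simp [Qop, Matrix.mulVec, dotProduct, Fintype.sum_prod_type, ite_mul]

lemma DG_mulVec (N n m : ℕ) (D : Matrix (Fin n) (Fin m) ℝ) (Γ : Fin N × Fin m → ℝ) :
    DG N n m D *ᵥ Γ =
      (1 / (n : ℝ)) • ∑ i : Fin N, (Rop N n i)ᵀ *ᵥ D *ᵥ (fun a => Γ (i, a)) := by
  ext x
  simp only [DG, Matrix.mulVec, dotProduct, Matrix.of_apply, Matrix.smul_apply,
    Pi.smul_apply, Finset.sum_apply, smul_eq_mul, Fintype.sum_prod_type, Matrix.mul_apply,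
    Matrix.transpose_apply, Finset.mul_sum, Finset.sum_mul, mul_assoc]
  exact Finset.sum_congr rfl fun i _ => Finset.sum_comm

lemma Mop_mulVec_eq_zero_iff (N n m : ℕ) (D : Matrix (Fin n) (Fin m) ℝ)
    (Γ : Fin N × Fin m → ℝ) :
    Mop N n m D *ᵥ Γ = 0 ↔ ∀ i, D *ᵥ (fun a => Γ (i, a)) = Rop N n i *ᵥ DG N n m D *ᵥ Γ := by
  have row (i : Fin N) (k : Fin n) : (Mop N n m D *ᵥ Γ) (i, k) =
      ((Qop N n m D i - Rop N n i * DG N n m D) *ᵥ Γ) k := rfl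
  simp only [funext_iff, Prod.forall, Pi.zero_apply, row, Matrix.sub_mulVec,
    ← Matrix.mulVec_mulVec, Qop_mulVec, Pi.sub_apply, sub_eq_zero]

lemma DG_mulVec_uncurry_of_patches (N n m : ℕ) (hn : 0 < n) (D : Matrix (Fin n) (Fin m) ℝ)
    (x : Fin N → ℝ) (α : Fin N → Fin m → ℝ) (hα : ∀ i, Rop N n i *ᵥ x = D *ᵥ α i) :
    DG N n m D *ᵥ Function.uncurry α = x := by
  have hn' : (n : ℝ) ≠ 0 := by exact_mod_cast hn.ne'
  calc DG N n m D *ᵥ Function.uncurry α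
      = (1 / (n : ℝ)) • ∑ i : Fin N, (Rop N n i)ᵀ *ᵥ Rop N n i *ᵥ x := by
        simp only [DG_mulVec, Function.uncurry_apply_pair, hα]
    _ = (1 / (n : ℝ)) • ((∑ i : Fin N, (Rop N n i)ᵀ * Rop N n i) *ᵥ x) := by
        simp only [Matrix.sum_mulVec, Matrix.mulVec_mulVec]
    _ = x := by
        rw [sum_transpose_Rop_mul_Rop, Matrix.smul_mulVec, Matrix.one_mulVec, smul_smul,
          one_div_mul_cancel hn', one_smul]

theorem local_global_equiv_general (n m N s : ℕ) (hn : 0 < n)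
    (D : Matrix (Fin n) (Fin m) ℝ) :
    {x : Fin N → ℝ | ∀ i : Fin N, ∃ α : Fin m → ℝ,
        (Rop N n i).mulVec x = D.mulVec α ∧ l0 α ≤ s} =
      {x : Fin N → ℝ | ∃ Γ : Fin N × Fin m → ℝ, x = (DG N n m D).mulVec Γ ∧
        (Mop N n m D).mulVec Γ = 0 ∧ ∀ i : Fin N, l0 (fun a => Γ (i, a)) ≤ s} := by
  ext x
  constructor
  · intro h
    choose α hα hs using h
    have hx := DG_mulVec_uncurry_of_patches N n m hn D x α hα
    refine ⟨Function.uncurry α, hx.symm, ?_, hs⟩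
    rw [Mop_mulVec_eq_zero_iff, hx]
    exact fun i => (hα i).symm
  · rintro ⟨Γ, rfl, hM, hs⟩ i
    exact ⟨fun a => Γ (i, a), ((Mop_mulVec_eq_zero_iff N n m D Γ).1 hM i).symm, hs i⟩

/-- Equivalence of the local and global characterizations of the patch-sparse model:
`𝓜 = {x : ∀ i, Rᵢ x = D αᵢ, ‖αᵢ‖₀ ≤ s} = {x : x = D_G Γ, MΓ = 0, ‖Γ‖₀,∞ ≤ s}`. -/
theorem local_global_equiv (n m N s : ℕ) [NeZero N] (hn : 0 < n) (hnN : n ≤ N)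
    (D : Matrix (Fin n) (Fin m) ℝ) :
    {x : Fin N → ℝ | ∀ i : Fin N, ∃ α : Fin m → ℝ,
        (Rop N n i).mulVec x = D.mulVec α ∧ l0 α ≤ s} =
      {x : Fin N → ℝ | ∃ Γ : Fin N × Fin m → ℝ, x = (DG N n m D).mulVec Γ ∧
        (Mop N n m D).mulVec Γ = 0 ∧ ∀ i : Fin N, l0 (fun a => Γ (i, a)) ≤ s} :=
  local_global_equiv_general n m N s hn D
end
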